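/- arXiv:1402.3364 — 7 statements merged into one kernel-verified Lean document; each statement's English description precedes it below -/
import Mathlib

section
/- For every finite connected graph G and every start vertex s, the hyperbolicity δ(G) of G is at most the cluster-diameter Δ_s(G) of the layering partition of G with respect to s. -/
/-- The hyperbolicity (S3 - S2)/2 of a quadruple of vertices of a graph, where
S1 ≤ S2 ≤ S3 are the distance sums d(a,b)+d(c,d), d(a,c)+d(b,d), d(a,d)+d(b,c)
sorted nondecreasingly (S3 - S2 = 2·max + min - (S1+S2+S3)). -/
noncomputable def graphDelta4 {V : Type*} (G : SimpleGraph V) (a b c d : V) : ℝ :=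
  let A : ℝ := (G.dist a b : ℝ) + (G.dist c d : ℝ)
  let B : ℝ := (G.dist a c : ℝ) + (G.dist b d : ℝ)
  let C : ℝ := (G.dist a d : ℝ) + (G.dist b c : ℝ)
  (2 * max A (max B C) + min A (min B C) - (A + B + C)) / 2
/-- Two vertices are in the same cluster of the layering partition `LP(G,s)` iff they
are in the same layer (same distance from `s`) and are joined by a walk all of whose
vertices are at distance at least that layer index from `s`. -/
def SameCluster {V : Type*} (G : SimpleGraph V) (s u v : V) : Prop :=
  G.dist s u = G.dist s v ∧
    ∃ p : G.Walk u v, ∀ w ∈ p.support, G.dist s u ≤ G.dist s w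

/-- The cluster-diameter `Δ_s(G)`: the largest diameter (in `d_G`) of a cluster of the
layering partition `LP(G,s)`. -/
noncomputable def clusterDiameter {V : Type*} (G : SimpleGraph V) (s : V) : ℕ :=
  sSup {n : ℕ | ∃ u v, SameCluster G s u v ∧ G.dist u v = n}

/-- The cluster-radius `R_s(G)`: the smallest `r` such that every cluster of the
layering partition `LP(G,s)` is contained in some ball of radius `r` of `G`. -/
noncomputable def clusterRadius {V : Type*} (G : SimpleGraph V) (s : V) : ℕ :=
  sInf {r : ℕ | ∀ u, ∃ c, ∀ v, SameCluster G s u v → G.dist c v ≤ r}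


/-!
Let `m(u, v)` be the largest `j` such that `u` and `v` are joined by a walk staying at distance
`≥ j` from `s`. Since `min (m u y) (m y v) ≤ m u v`, the function
`t(u, v) = d(s, u) + d(s, v) - 2 m(u, v)` is a tree metric: of its three four-point sums the two
largest agree. The lowest vertex of a geodesic from `u` to `v` gives `t ≤ d`, and descending along
geodesics from `u` and `v` towards `s` down to layer `m(u, v)` lands in a single cluster, which
gives `d ≤ t + Δ_s(G)`. A metric within additive `Δ` of a `0`-hyperbolic one is `Δ`-hyperbolic.
-/

theorem four_point_of_ultrametric {α : Type*} (m : α → α → ℕ) (hsymm : ∀ a b, m a b = m b a)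
    (hultra : ∀ a b c, min (m a b) (m b c) ≤ m a c) (u v w x : α) :
    min (m u v + m w x) (m u w + m v x) ≤ m u x + m v w := by
  have := hultra u v x; have := hultra v u w; have := hultra u w x; have := hultra v x w
  have := hsymm u v; have := hsymm w x
  omega

theorem graphDelta4_le_of_approx {V : Type*} (G : SimpleGraph V) (h : V → ℕ) (m : V → V → ℕ)
    (Δ : ℕ) (hsymm : ∀ a b, m a b = m b a) (hultra : ∀ a b c, min (m a b) (m b c) ≤ m a c)
    (hlow : ∀ a b, h a + h b ≤ G.dist a b + 2 * m a b)
    (hup : ∀ a b, G.dist a b + 2 * m a b ≤ h a + h b + Δ) (u v w x : V) :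
    graphDelta4 G u v w x ≤ Δ := by
  have key : 2 * max (G.dist u v + G.dist w x)
        (max (G.dist u w + G.dist v x) (G.dist u x + G.dist v w)) +
      min (G.dist u v + G.dist w x)
        (min (G.dist u w + G.dist v x) (G.dist u x + G.dist v w)) ≤
      (G.dist u v + G.dist w x) + (G.dist u w + G.dist v x) +
        (G.dist u x + G.dist v w) + 2 * Δ := by
    have := four_point_of_ultrametric m hsymm hultra u v w x
    have := four_point_of_ultrametric m hsymm hultra u x w v
    have := four_point_of_ultrametric m hsymm hultra u v x w
    have := hsymm w v; have := hsymm x v; have := hsymm x w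
    have := hlow u v; have := hlow w x; have := hlow u w; have := hlow v x
    have := hlow u x; have := hlow v w
    have := hup u v; have := hup w x; have := hup u w; have := hup v x
    have := hup u x; have := hup v w
    omega
  have key' := (Nat.cast_le (α := ℝ)).2 key
  push_cast at key'
  unfold graphDelta4
  linarith

namespace SimpleGraph

variable {V : Type*} {G : SimpleGraph V}

def JoinedAbove (G : SimpleGraph V) (s : V) (j : ℕ) (u v : V) : Prop :=
  ∃ p : G.Walk u v, ∀ z ∈ p.support, j ≤ G.dist s z

/-- The layer of the lowest common ancestor of the clusters of `u` and `v` in `Γ(G, s)`. -/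
noncomputable def meetLevel (G : SimpleGraph V) (s u v : V) : ℕ :=
  sSup {j | G.JoinedAbove s j u v}

namespace JoinedAbove

variable {s u v y : V} {j : ℕ}

lemma le_dist_left (h : G.JoinedAbove s j u v) : j ≤ G.dist s u :=
  let ⟨p, hp⟩ := h; hp u p.start_mem_support

lemma mono {j' : ℕ} (h : G.JoinedAbove s j u v) (hj : j' ≤ j) : G.JoinedAbove s j' u v :=
  let ⟨p, hp⟩ := h; ⟨p, fun z hz => hj.trans (hp z hz)⟩

lemma symm (h : G.JoinedAbove s j u v) : G.JoinedAbove s j v u :=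
  let ⟨p, hp⟩ := h
  ⟨p.reverse, fun z hz => hp z (by rwa [Walk.support_reverse, List.mem_reverse] at hz)⟩

lemma trans (h₁ : G.JoinedAbove s j u y) (h₂ : G.JoinedAbove s j y v) :
    G.JoinedAbove s j u v := by
  obtain ⟨p, hp⟩ := h₁
  obtain ⟨q, hq⟩ := h₂
  refine ⟨p.append q, fun z hz => ?_⟩
  rcases (Walk.mem_support_append_iff p q).mp hz with hz | hz
  exacts [hp z hz, hq z hz]

end JoinedAbove

lemma joinedAbove_comm {s u v : V} {j : ℕ} : G.JoinedAbove s j u v ↔ G.JoinedAbove s j v u :=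
  ⟨.symm, .symm⟩

lemma Connected.joinedAbove_zero (hG : G.Connected) (s u v : V) : G.JoinedAbove s 0 u v :=
  ⟨(hG u v).some, fun _ _ => Nat.zero_le _⟩

lemma bddAbove_setOf_joinedAbove (s u v : V) : BddAbove {j | G.JoinedAbove s j u v} :=
  ⟨G.dist s u, fun _ hj => hj.le_dist_left⟩

lemma le_meetLevel {s u v : V} {j : ℕ} (h : G.JoinedAbove s j u v) : j ≤ G.meetLevel s u v :=
  le_csSup (bddAbove_setOf_joinedAbove s u v) h

lemma Connected.joinedAbove_meetLevel (hG : G.Connected) (s u v : V) :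
    G.JoinedAbove s (G.meetLevel s u v) u v :=
  Nat.sSup_mem ⟨0, hG.joinedAbove_zero s u v⟩ (bddAbove_setOf_joinedAbove s u v)

lemma meetLevel_comm (s u v : V) : G.meetLevel s u v = G.meetLevel s v u := by
  simp only [meetLevel, joinedAbove_comm]

lemma Connected.min_meetLevel_le (hG : G.Connected) (s u y v : V) :
    min (G.meetLevel s u y) (G.meetLevel s y v) ≤ G.meetLevel s u v :=
  le_meetLevel <| ((hG.joinedAbove_meetLevel s u y).mono (min_le_left _ _)).trans
    ((hG.joinedAbove_meetLevel s y v).mono (min_le_right _ _))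

lemma Connected.dist_add_dist_le_dist_add_two_mul_meetLevel (hG : G.Connected) (s u v : V) :
    G.dist s u + G.dist s v ≤ G.dist u v + 2 * G.meetLevel s u v := by
  classical
  obtain ⟨p, hp⟩ := hG.exists_walk_length_eq_dist u v
  obtain ⟨z, hz, hzmin⟩ := p.support.toFinset.exists_min_image (G.dist s)
    ⟨u, List.mem_toFinset.mpr p.start_mem_support⟩
  rw [List.mem_toFinset] at hz
  have hz_le : G.dist s z ≤ G.meetLevel s u v :=
    le_meetLevel ⟨p, fun y hy => hzmin y (List.mem_toFinset.mpr hy)⟩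
  have hu : G.dist z u ≤ (p.takeUntil z hz).length := by
    rw [dist_comm]; exact dist_le _
  have hv : G.dist z v ≤ (p.dropUntil z hz).length := dist_le _
  have hsplit := congrArg Walk.length (p.take_spec hz)
  rw [Walk.length_append] at hsplit
  have := hG.dist_triangle (u := s) (v := z) (w := u)
  have := hG.dist_triangle (u := s) (v := z) (w := v)
  omega

lemma Connected.exists_joinedAbove_of_le (hG : G.Connected) {s u : V} {j : ℕ}
    (hj : j ≤ G.dist s u) :
    ∃ u', G.dist s u' = j ∧ G.dist u' u + j = G.dist s u ∧ G.JoinedAbove s j u' u := by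
  classical
  obtain ⟨p, hp⟩ := hG.exists_walk_length_eq_dist s u
  have hdrop : (p.drop j).length = G.dist s u - j := by rw [Walk.drop_length, hp]
  have h₁ : G.dist s (p.getVert j) ≤ j :=
    (dist_le (p.take j)).trans (by rw [Walk.take_length]; exact min_le_left _ _)
  have h₂ : G.dist (p.getVert j) u ≤ G.dist s u - j := hdrop ▸ dist_le (p.drop j)
  have h₃ := hG.dist_triangle (u := s) (v := p.getVert j) (w := u)
  refine ⟨p.getVert j, by omega, by omega, p.drop j, fun z hz => ?_⟩
  have : G.dist z u ≤ G.dist s u - j :=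
    hdrop ▸ (dist_le _).trans ((p.drop j).length_dropUntil_le_length hz)
  have := hG.dist_triangle (u := s) (v := z) (w := u)
  omega

lemma dist_le_clusterDiameter [Finite V] {s u v : V} (h : SameCluster G s u v) :
    G.dist u v ≤ clusterDiameter G s := by
  refine le_csSup (Set.Finite.bddAbove ?_) ⟨u, v, h, rfl⟩
  refine (Set.finite_range fun p : V × V => G.dist p.1 p.2).subset ?_
  rintro n ⟨a, b, -, rfl⟩
  exact ⟨(a, b), rfl⟩

lemma Connected.dist_add_two_mul_meetLevel_le [Finite V] (hG : G.Connected) (s u v : V) :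
    G.dist u v + 2 * G.meetLevel s u v ≤ G.dist s u + G.dist s v + clusterDiameter G s := by
  have hp := hG.joinedAbove_meetLevel s u v
  obtain ⟨u', hu', huu', hu'u⟩ := hG.exists_joinedAbove_of_le hp.le_dist_left
  obtain ⟨v', hv', hvv', hv'v⟩ := hG.exists_joinedAbove_of_le hp.symm.le_dist_left
  have hcluster : SameCluster G s u' v' :=
    ⟨hu'.trans hv'.symm, hu' ▸ hu'u.trans (hp.trans hv'v.symm)⟩
  have := dist_le_clusterDiameter hcluster
  have := hG.dist_triangle (u := u) (v := u') (w := v)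
  have := hG.dist_triangle (u := u') (v := v') (w := v)
  have := G.dist_comm (u := u) (v := u')
  omega

end SimpleGraph

/-- For every finite connected graph `G` and start vertex `s`, the hyperbolicity of
any quadruple of vertices (hence the hyperbolicity `δ(G)`) is at most the
cluster-diameter `Δ_s(G)` of the layering partition of `G` with respect to `s`. -/
theorem hyperbolicity_le_clusterDiameter {V : Type*} [Fintype V]
    (G : SimpleGraph V) (hG : G.Connected) (s : V) :
    ∀ u v w x : V, graphDelta4 G u v w x ≤ (clusterDiameter G s : ℝ) :=
  graphDelta4_le_of_approx G (G.dist s) (G.meetLevel s) _ (G.meetLevel_comm s)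
    (hG.min_meetLevel_le s) (hG.dist_add_dist_le_dist_add_two_mul_meetLevel s)
    (hG.dist_add_two_mul_meetLevel_le s)
end

section
/- Let G be a finite connected graph, s a vertex, and suppose M ⊆ V is a set of vertices that separates vertices x and y from vertices z and w (i.e., every path from {x,y} to {z,w} meets M), and the diameter of M in G is at most Δ. Then the hyperbolicity of the quadruple (x,y,z,w) is at most Δ, i.e., the two larger of the three distance sums d_G(x,y)+d_G(z,w), d_G(x,z)+d_G(y,w), d_G(x,w)+d_G(y,z) differ by at most 2Δ. -/
private lemma sep_dist_ge {V : Type*} [DecidableEq V] (G : SimpleGraph V) (a b : V) (M : Set V)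
    (hab : ∀ p : G.Walk a b, ∃ m ∈ p.support, m ∈ M)
    (hr : G.Reachable a b) (μa μb : ℕ)
    (ha : ∀ m ∈ M, μa ≤ G.dist a m) (hb : ∀ m ∈ M, μb ≤ G.dist b m) :
    μa + μb ≤ G.dist a b := by
  obtain ⟨p, hp⟩ := hr.exists_walk_length_eq_dist
  obtain ⟨m, hm, hmM⟩ := hab p
  have hsplit := congrArg SimpleGraph.Walk.length (p.take_spec hm)
  rw [SimpleGraph.Walk.length_append] at hsplit
  have h1 : G.dist a m ≤ (p.takeUntil m hm).length := SimpleGraph.dist_le _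
  have h2 : G.dist m b ≤ (p.dropUntil m hm).length := SimpleGraph.dist_le _
  have h3 := ha m hmM
  have h4 := hb m hmM
  rw [SimpleGraph.dist_comm] at h4
  omega

/-- If a set `M` of vertices of diameter at most `Δ` separates `{x,y}` from `{z,w}` in a
finite connected graph `G`, then the hyperbolicity of the quadruple `(x,y,z,w)` is at
most `Δ`: the two larger of the three distance sums d(x,y)+d(z,w), d(x,z)+d(y,w),
d(x,w)+d(y,z) differ by at most `2Δ`. -/
theorem quadruple_hyperbolicity_le_of_separator {V : Type*} [Fintype V]
    (G : SimpleGraph V) (hG : G.Connected) (x y z w : V) (M : Set V) (Δ : ℕ)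
    (hdiam : ∀ m ∈ M, ∀ m' ∈ M, G.dist m m' ≤ Δ)
    (hsep : ∀ a ∈ ({x, y} : Set V), ∀ b ∈ ({z, w} : Set V),
      ∀ p : G.Walk a b, ∃ m ∈ p.support, m ∈ M) :
    graphDelta4 G x y z w ≤ (Δ : ℝ) := by
  classical
  -- M is nonempty
  have hMne : M.Nonempty := by
    obtain ⟨m, _, hmM⟩ := hsep x (by simp) z (by simp) (hG x z).some
    exact ⟨m, hmM⟩
  have hMfin : M.Finite := Set.toFinite M
  -- choose nearest points of M to each of x, y, z, w
  obtain ⟨mx, hmx, hminx⟩ := Set.exists_min_image M (fun m => G.dist x m) hMfin hMne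
  obtain ⟨my, hmy, hminy⟩ := Set.exists_min_image M (fun m => G.dist y m) hMfin hMne
  obtain ⟨mz, hmz, hminz⟩ := Set.exists_min_image M (fun m => G.dist z m) hMfin hMne
  obtain ⟨mw, hmw, hminw⟩ := Set.exists_min_image M (fun m => G.dist w m) hMfin hMne
  set μx := G.dist x mx with hμx
  set μy := G.dist y my with hμy
  set μz := G.dist z mz with hμz
  set μw := G.dist w mw with hμw
  -- upper bound: for any a b with chosen nearest points ma mb
  have upper : ∀ (a b ma mb : V), ma ∈ M → mb ∈ M →
      G.dist a b ≤ G.dist a ma + G.dist b mb + Δ := by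
    intro a b ma mb hma hmb
    have t1 : G.dist a b ≤ G.dist a ma + G.dist ma b := hG.dist_triangle
    have t2 : G.dist ma b ≤ G.dist ma mb + G.dist mb b := hG.dist_triangle
    have t3 : G.dist ma mb ≤ Δ := hdiam ma hma mb hmb
    have t4 : G.dist mb b = G.dist b mb := SimpleGraph.dist_comm ..
    omega
  -- lower bounds for the separated pairs
  have lxz : μx + μz ≤ G.dist x z :=
    sep_dist_ge G x z M (hsep x (by simp) z (by simp)) (hG x z) μx μz
      (fun m hm => hminx m hm) (fun m hm => hminz m hm)
  have lxw : μx + μw ≤ G.dist x w :=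
    sep_dist_ge G x w M (hsep x (by simp) w (by simp)) (hG x w) μx μw
      (fun m hm => hminx m hm) (fun m hm => hminw m hm)
  have lyz : μy + μz ≤ G.dist y z :=
    sep_dist_ge G y z M (hsep y (by simp) z (by simp)) (hG y z) μy μz
      (fun m hm => hminy m hm) (fun m hm => hminz m hm)
  have lyw : μy + μw ≤ G.dist y w :=
    sep_dist_ge G y w M (hsep y (by simp) w (by simp)) (hG y w) μy μw
      (fun m hm => hminy m hm) (fun m hm => hminw m hm)
  -- upper bounds
  have uxy : G.dist x y ≤ μx + μy + Δ := upper x y mx my hmx hmy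
  have uzw : G.dist z w ≤ μz + μw + Δ := upper z w mz mw hmz hmw
  have uxz : G.dist x z ≤ μx + μz + Δ := upper x z mx mz hmx hmz
  have uyw : G.dist y w ≤ μy + μw + Δ := upper y w my mw hmy hmw
  have uxw : G.dist x w ≤ μx + μw + Δ := upper x w mx mw hmx hmw
  have uyz : G.dist y z ≤ μy + μz + Δ := upper y z my mz hmy hmz
  -- pass to reals
  unfold graphDelta4
  set A : ℝ := (G.dist x y : ℝ) + (G.dist z w : ℝ) with hA
  set B : ℝ := (G.dist x z : ℝ) + (G.dist y w : ℝ) with hB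
  set C : ℝ := (G.dist x w : ℝ) + (G.dist y z : ℝ) with hC
  set s : ℝ := (μx : ℝ) + (μy : ℝ) + (μz : ℝ) + (μw : ℝ) with hs
  have hAu : A ≤ s + 2 * Δ := by
    rw [hA, hs]
    have := (Nat.cast_le (α := ℝ)).2 uxy
    have := (Nat.cast_le (α := ℝ)).2 uzw
    push_cast at *; linarith
  have hBu : B ≤ s + 2 * Δ := by
    rw [hB, hs]
    have := (Nat.cast_le (α := ℝ)).2 uxz
    have := (Nat.cast_le (α := ℝ)).2 uyw
    push_cast at *; linarith
  have hCu : C ≤ s + 2 * Δ := by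
    rw [hC, hs]
    have := (Nat.cast_le (α := ℝ)).2 uxw
    have := (Nat.cast_le (α := ℝ)).2 uyz
    push_cast at *; linarith
  have hBl : s ≤ B := by
    rw [hB, hs]
    have := (Nat.cast_le (α := ℝ)).2 lxz
    have := (Nat.cast_le (α := ℝ)).2 lyw
    push_cast at *; linarith
  have hCl : s ≤ C := by
    rw [hC, hs]
    have := (Nat.cast_le (α := ℝ)).2 lxw
    have := (Nat.cast_le (α := ℝ)).2 lyz
    push_cast at *; linarith
  -- final arithmetic
  have hminBC : s ≤ min B C := le_min hBl hCl
  have hmaxle : max A (max B C) ≤ min B C + 2 * Δ := by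
    apply max_le (by linarith)
    · apply max_le <;> rcases le_total B C with h | h <;>
        simp [min_eq_left h, min_eq_right h] <;> linarith
  rw [div_le_iff₀ (by norm_num : (0:ℝ) < 2)]
  rcases le_total A (max B C) with h | h
  · rw [max_eq_right h]
    rcases le_total B C with h2 | h2
    · rw [max_eq_right h2, min_eq_left h2] at *
      have : min A B ≤ A := min_le_left _ _
      linarith
    · rw [max_eq_left h2, min_eq_right h2] at *
      have : min A C ≤ A := min_le_left _ _
      linarith
  · rw [max_eq_left h]
    have h1 : min A (min B C) ≤ min B C := min_le_right _ _
    have h2 : min B C ≤ B := min_le_left _ _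
    have h3 : min B C ≤ C := min_le_right _ _
    have h4 : A ≤ min B C + 2 * Δ := le_trans (le_max_left A (max B C)) hmaxle
    linarith
end

section
/- For every finite connected graph G and any start vertex s, the cluster-radius R_s(G) of the layering partition satisfies tb(G) ≤ R_s(G) + 1, where tb(G) is the tree-breadth of G. Consequently tb(G) ≤ Δ_s(G) + 1. -/
/-- A tree-decomposition of a graph `G`: a tree `T` on an index type whose nodes carry
bags `X i ⊆ V` covering all vertices and all edges, such that the bags containing any
fixed vertex form a connected subtree of `T` (here: every node on the (unique) path of
`T` between two bags containing `v` also contains `v`). -/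
def IsTreeDecomp {V : Type} {ι : Type} (G : SimpleGraph V) (T : SimpleGraph ι)
    (X : ι → Set V) : Prop :=
  T.IsTree ∧
  (∀ v, ∃ i, v ∈ X i) ∧
  (∀ u v, G.Adj u v → ∃ i, u ∈ X i ∧ v ∈ X i) ∧
  (∀ (v : V) (i j : ι), v ∈ X i → v ∈ X j →
    ∀ p : T.Walk i j, p.IsPath → ∀ k ∈ p.support, v ∈ X k)

/-- The tree-length `tl(G)`: the least `ℓ` such that `G` has a tree-decomposition all
of whose bags have `d_G`-diameter at most `ℓ`. -/
noncomputable def treeLength {V : Type} (G : SimpleGraph V) : ℕ :=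
  sInf {ℓ : ℕ | ∃ (ι : Type) (T : SimpleGraph ι) (X : ι → Set V),
    IsTreeDecomp G T X ∧ ∀ i, ∀ u ∈ X i, ∀ v ∈ X i, G.dist u v ≤ ℓ}

/-- The tree-breadth `tb(G)`: the least `r` such that `G` has a tree-decomposition all
of whose bags are contained in balls of radius `r` of `G`. -/
noncomputable def treeBreadth {V : Type} (G : SimpleGraph V) : ℕ :=
  sInf {r : ℕ | ∃ (ι : Type) (T : SimpleGraph ι) (X : ι → Set V),
    IsTreeDecomp G T X ∧ ∀ i, ∃ c, ∀ u ∈ X i, G.dist u c ≤ r}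

/-! The neighbours one layer closer to `s` of the vertices of a cluster all lie in a single
cluster, its parent; the parent pointers, which lower the layer, organise the clusters into a
tree. The bag of a cluster is the cluster together with its neighbours in the parent cluster.
A vertex `v` then lies in the bag of its own cluster and in bags of some of its children only, a
star in the tree, so this is a tree-decomposition; and a ball of radius `R_s(G)` around a
cluster grows to a ball of radius `R_s(G) + 1` around its bag. Finally `R_s(G) ≤ Δ_s(G)`, since
a cluster lies in the ball of radius its diameter around any of its vertices. -/

namespace SimpleGraph

variable {V : Type*} {G : SimpleGraph V}

lemma exists_adj_dist_add_one_eq {s u : V} (h : G.dist s u ≠ 0) :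
    ∃ y, G.Adj y u ∧ G.dist s y + 1 = G.dist s u := by
  obtain ⟨p, hp⟩ := exists_walk_of_dist_ne_zero h
  have hnil : ¬p.Nil := fun hn => h (by rw [← hp, hn.length_eq_zero])
  have hy : G.dist s p.penultimate + 1 ≤ G.dist s u := by
    have := dist_le p.dropLast
    rw [← p.length_dropLast_add_one hnil] at hp
    omega
  refine ⟨p.penultimate, p.adj_penultimate hnil, ?_⟩
  rcases (p.adj_penultimate hnil).diff_dist_adj (u := s) with h' | h' | h' <;> omega

section ParentPointers

variable {ι : Type*} {P : ι → ι} {rk : ι → ℕ}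

lemma eq_of_fromRel_adj_of_rank_le (hrk : ∀ x, P x ≠ x → rk (P x) < rk x) {m y : ι}
    (hadj : (fromRel fun a b => P a = b).Adj m y) (hy : rk y ≤ rk m) : P m = y := by
  obtain ⟨hne, hmy | hym⟩ := (fromRel_adj _ _ _).mp hadj
  · exact hmy
  · have := hrk y (hym ▸ hne)
    rw [hym] at this
    omega

/-- On a cycle, a vertex of maximal rank would have both of its cycle neighbours equal to its
parent. -/
theorem isAcyclic_fromRel_of_rank (hrk : ∀ x, P x ≠ x → rk (P x) < rk x) :
    (fromRel fun a b => P a = b).IsAcyclic := by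
  classical
  intro a c hc
  obtain ⟨m, hm, hmax⟩ := c.support.toFinset.exists_max_image rk ⟨a, by simp⟩
  rw [List.mem_toFinset] at hm
  set c' := c.rotate m hm
  have hc' : c'.IsCycle := hc.rotate hm
  have hparent : ∀ y ∈ c'.support, (fromRel fun a b => P a = b).Adj m y → P m = y :=
    fun y hy hadj => eq_of_fromRel_adj_of_rank_le hrk hadj
      (hmax y (List.mem_toFinset.mpr ((c.mem_support_rotate_iff m hm).mp hy)))
  exact hc'.snd_ne_penultimate <|
    (hparent _ (c'.getVert_mem_support 1) (c'.adj_snd hc'.not_nil)).symm.trans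
      (hparent _ (c'.getVert_mem_support _) (c'.adj_penultimate hc'.not_nil).symm)

theorem connected_fromRel_of_rank (hrk : ∀ x, P x ≠ x → rk (P x) < rk x) (root : ι)
    (hroot : ∀ x, P x = x → x = root) : (fromRel fun a b => P a = b).Connected := by
  have hreach : ∀ x, (fromRel fun a b => P a = b).Reachable x root := by
    intro x
    induction h : rk x using Nat.strong_induction_on generalizing x with
    | _ n ih =>
      by_cases hx : P x = x
      · rw [hroot x hx]
      · have hadj : (fromRel fun a b => P a = b).Adj x (P x) :=
          (fromRel_adj _ _ _).mpr ⟨Ne.symm hx, Or.inl rfl⟩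
        exact hadj.reachable.trans (ih _ (h ▸ hrk x hx) _ rfl)
  have : Nonempty ι := ⟨root⟩
  exact ⟨fun a b => (hreach a).trans (hreach b).symm⟩

theorem isTree_fromRel_of_rank (hrk : ∀ x, P x ≠ x → rk (P x) < rk x) (root : ι)
    (hroot : ∀ x, P x = x → x = root) : (fromRel fun a b => P a = b).IsTree :=
  ⟨connected_fromRel_of_rank hrk root hroot, isAcyclic_fromRel_of_rank hrk⟩

end ParentPointers

lemma preconnected_induce_of_forall_eq_or_adj {ι : Type*} {T : SimpleGraph ι} {S : Set ι}
    {m : ι} (hm : m ∈ S) (h : ∀ i ∈ S, i = m ∨ T.Adj i m) : (T.induce S).Preconnected := by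
  have hreach : ∀ i : S, (T.induce S).Reachable i ⟨m, hm⟩ := by
    rintro ⟨i, hi⟩
    rcases h i hi with rfl | hadj
    · rfl
    · exact Adj.reachable (G := T.induce S) hadj
  exact fun i j => (hreach i).trans (hreach j).symm

lemma IsAcyclic.mem_of_mem_support_of_preconnected_induce {ι : Type*} {T : SimpleGraph ι}
    (hT : T.IsAcyclic) {S : Set ι} (hS : (T.induce S).Preconnected) {i j : ι} (hi : i ∈ S)
    (hj : j ∈ S) {p : T.Walk i j} (hp : p.IsPath) : ∀ k ∈ p.support, k ∈ S := by
  classical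
  obtain ⟨q⟩ := hS ⟨i, hi⟩ ⟨j, hj⟩
  set q' := q.bypass.map (Embedding.induce S).toHom
  have hq' : q'.IsPath := q.bypass_isPath.map Subtype.val_injective
  have hpq : p = q' :=
    congrArg Subtype.val ((hT.subsingleton_path i j).elim ⟨p, hp⟩ ⟨q', hq'⟩)
  have hq'S : ∀ k ∈ q'.support, k ∈ S := by
    simp only [q', Walk.support_map, List.mem_map]
    rintro k ⟨k', -, rfl⟩
    exact k'.2
  exact fun k hk => hq'S k (hpq ▸ hk)

end SimpleGraph

open SimpleGraph

namespace SameCluster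

variable {V : Type*} {G : SimpleGraph V} {s u u' v v' w : V}

protected lemma refl (G : SimpleGraph V) (s u : V) : SameCluster G s u u :=
  ⟨rfl, .nil, by simp⟩

protected lemma symm (h : SameCluster G s u v) : SameCluster G s v u := by
  obtain ⟨hlayer, p, hp⟩ := h
  refine ⟨hlayer.symm, p.reverse, fun x hx => ?_⟩
  rw [Walk.support_reverse, List.mem_reverse] at hx
  exact hlayer ▸ hp x hx

protected lemma trans (h : SameCluster G s u v) (h' : SameCluster G s v w) :
    SameCluster G s u w := by
  obtain ⟨hlayer, p, hp⟩ := h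
  obtain ⟨hlayer', q, hq⟩ := h'
  refine ⟨hlayer.trans hlayer', p.append q, fun x hx => ?_⟩
  rw [Walk.mem_support_append_iff] at hx
  rcases hx with hx | hx
  · exact hp x hx
  · exact hlayer ▸ hq x hx

lemma of_adj (hadj : G.Adj u v) (hlayer : G.dist s u = G.dist s v) : SameCluster G s u v := by
  refine ⟨hlayer, hadj.toWalk, fun x hx => ?_⟩
  rcases List.mem_pair.mp (by simpa using hx) with rfl | rfl <;> omega

lemma of_lower_neighbors (h : SameCluster G s u u') (hv : G.Adj v u) (hv' : G.Adj v' u')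
    (hvu : G.dist s v + 1 = G.dist s u) (hv'u' : G.dist s v' + 1 = G.dist s u') :
    SameCluster G s v v' := by
  obtain ⟨hlayer, p, hp⟩ := h
  refine ⟨by omega, .cons hv (p.concat hv'.symm), fun x hx => ?_⟩
  rw [Walk.support_cons, List.mem_cons, Walk.support_concat, List.mem_append,
    List.mem_singleton] at hx
  rcases hx with rfl | hx | rfl
  · exact le_rfl
  · have := hp x hx
    omega
  · omega

end SameCluster

namespace LayeringPartition

variable {V : Type*} (G : SimpleGraph V) (s : V) {u v : V}

def clusterSetoid : Setoid V :=
  ⟨SameCluster G s, ⟨SameCluster.refl G s, SameCluster.symm, SameCluster.trans⟩⟩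

abbrev Cluster : Type _ := Quotient (clusterSetoid G s)

abbrev toCluster (u : V) : Cluster G s := Quotient.mk _ u

lemma toCluster_eq_iff : toCluster G s u = toCluster G s v ↔ SameCluster G s u v :=
  Quotient.eq

noncomputable def parent (u : V) : V :=
  if h : G.dist s u = 0 then u else (exists_adj_dist_add_one_eq h).choose

variable {G s}

lemma parent_of_dist_eq_zero (h : G.dist s u = 0) : parent G s u = u := dif_pos h

lemma parent_spec (h : G.dist s u ≠ 0) :
    G.Adj (parent G s u) u ∧ G.dist s (parent G s u) + 1 = G.dist s u := by
  rw [parent, dif_neg h]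
  exact (exists_adj_dist_add_one_eq h).choose_spec

lemma sameCluster_parent (h : SameCluster G s u v) :
    SameCluster G s (parent G s u) (parent G s v) := by
  by_cases hu : G.dist s u = 0
  · rwa [parent_of_dist_eq_zero hu, parent_of_dist_eq_zero (h.1 ▸ hu)]
  · obtain ⟨hadj, hlayer⟩ := parent_spec hu
    obtain ⟨hadj', hlayer'⟩ := parent_spec (h.1 ▸ hu)
    exact h.of_lower_neighbors hadj hadj' hlayer hlayer'

variable (G s)

noncomputable def parentCluster : Cluster G s → Cluster G s :=
  Quotient.map (parent G s) fun _ _ => sameCluster_parent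

noncomputable def layer : Cluster G s → ℕ :=
  Quotient.lift (G.dist s) fun _ _ h => h.1

lemma layer_parentCluster_add_one {c : Cluster G s} (h : layer G s c ≠ 0) :
    layer G s (parentCluster G s c) + 1 = layer G s c := by
  induction c using Quotient.inductionOn with
  | h u => exact (parent_spec h).2

lemma layer_parentCluster_lt (c : Cluster G s) (h : parentCluster G s c ≠ c) :
    layer G s (parentCluster G s c) < layer G s c := by
  induction c using Quotient.inductionOn with
  | h u =>
    by_cases hu : G.dist s u = 0
    · exact absurd (congrArg (toCluster G s) (parent_of_dist_eq_zero hu)) h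
    · exact Nat.lt_of_succ_le (layer_parentCluster_add_one G s (c := toCluster G s u) hu).le

variable {G} in
lemma eq_root_of_parentCluster_eq (hG : G.Connected) (c : Cluster G s)
    (h : parentCluster G s c = c) : c = toCluster G s s := by
  induction c using Quotient.inductionOn with
  | h u =>
    by_cases hu : G.dist s u = 0
    · rw [hG.dist_eq_zero_iff.mp hu]
    · have hlayer := layer_parentCluster_add_one G s (c := toCluster G s u) hu
      rw [h] at hlayer
      exact absurd hlayer (Nat.succ_ne_self _)

def clusterTree : SimpleGraph (Cluster G s) :=
  fromRel fun a b => parentCluster G s a = b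

variable {G} in
theorem isTree_clusterTree (hG : G.Connected) : (clusterTree G s).IsTree :=
  isTree_fromRel_of_rank (layer_parentCluster_lt G s) _ (eq_root_of_parentCluster_eq s hG)

def bag (c : Cluster G s) : Set V :=
  {v | toCluster G s v = c ∨
    ∃ u, toCluster G s u = c ∧ G.Adj v u ∧ G.dist s v + 1 = G.dist s u}

variable {G s}

lemma parentCluster_toCluster_of_adj (hadj : G.Adj v u) (hlayer : G.dist s v + 1 = G.dist s u) :
    parentCluster G s (toCluster G s u) = toCluster G s v := by
  have hu : G.dist s u ≠ 0 := by omega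
  obtain ⟨hadj', hlayer'⟩ := parent_spec hu
  exact Quotient.sound ((SameCluster.refl G s u).of_lower_neighbors hadj' hadj hlayer' hlayer)

lemma eq_or_clusterTree_adj_of_mem_bag {c : Cluster G s} (hv : v ∈ bag G s c) :
    c = toCluster G s v ∨ (clusterTree G s).Adj c (toCluster G s v) := by
  rcases hv with hv | ⟨u, rfl, hadj, hlayer⟩
  · exact Or.inl hv.symm
  · refine Or.inr ((fromRel_adj _ _ _).mpr ⟨fun he => ?_, Or.inl ?_⟩)
    · have : G.dist s u = G.dist s v := congrArg (layer G s) he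
      omega
    · exact parentCluster_toCluster_of_adj hadj hlayer

lemma dist_le_of_mem_bag {c w : V} {r : ℕ} (hc : ∀ v, SameCluster G s u v → G.dist c v ≤ r)
    (hw : w ∈ bag G s (toCluster G s u)) : G.dist w c ≤ r + 1 := by
  rcases hw with hw | ⟨x, hx, hadj, -⟩
  · rw [dist_comm]
    exact (hc w ((toCluster_eq_iff G s).mp hw).symm).trans (Nat.le_succ r)
  · calc G.dist w c ≤ G.dist w x + G.dist x c := hadj.reachable.dist_triangle_left c
      _ = 1 + G.dist c x := by rw [dist_eq_one_iff_adj.mpr hadj, dist_comm]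
      _ ≤ r + 1 := by have := hc x ((toCluster_eq_iff G s).mp hx).symm; omega

end LayeringPartition

theorem LayeringPartition.isTreeDecomp_bag {V : Type} {G : SimpleGraph V} (hG : G.Connected)
    (s : V) : IsTreeDecomp G (clusterTree G s) (bag G s) := by
  refine ⟨isTree_clusterTree s hG, fun v => ⟨_, Or.inl rfl⟩, fun u v hadj => ?_, ?_⟩
  · have hvu := hadj.diff_dist_adj (u := s)
    have huv := hadj.symm.diff_dist_adj (u := s)
    rcases lt_trichotomy (G.dist s u) (G.dist s v) with h | h | h
    · exact ⟨_, Or.inr ⟨v, rfl, hadj, by omega⟩, Or.inl rfl⟩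
    · exact ⟨_, Or.inl rfl, Or.inl ((toCluster_eq_iff G s).mpr (.of_adj hadj h)).symm⟩
    · exact ⟨_, Or.inl rfl, Or.inr ⟨u, rfl, hadj.symm, by omega⟩⟩
  · intro v i j hi hj p hp
    refine (isTree_clusterTree s hG).isAcyclic.mem_of_mem_support_of_preconnected_induce
      (preconnected_induce_of_forall_eq_or_adj (Or.inl rfl) fun k hk => ?_) hi hj hp
    exact eq_or_clusterTree_adj_of_mem_bag hk

section Finite

variable {V : Type*} [Finite V] (G : SimpleGraph V) (s : V)

lemma exists_center_dist_le_clusterRadius (u : V) :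
    ∃ c, ∀ v, SameCluster G s u v → G.dist c v ≤ clusterRadius G s := by
  obtain ⟨B, hB⟩ := (Set.finite_range (G.dist s)).bddAbove
  exact Nat.sInf_mem (s := {r | ∀ u, ∃ c, ∀ v, SameCluster G s u v → G.dist c v ≤ r})
    ⟨B, fun _ => ⟨s, fun v _ => hB ⟨v, rfl⟩⟩⟩ u

lemma clusterRadius_le_clusterDiameter : clusterRadius G s ≤ clusterDiameter G s := by
  have hbdd : BddAbove {n : ℕ | ∃ u v, SameCluster G s u v ∧ G.dist u v = n} :=
    ((Set.finite_range fun p : V × V => G.dist p.1 p.2).subset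
      (by rintro _ ⟨u, v, -, rfl⟩; exact ⟨(u, v), rfl⟩)).bddAbove
  exact Nat.sInf_le fun u => ⟨u, fun v huv => le_csSup hbdd ⟨u, v, huv, rfl⟩⟩

end Finite

lemma treeBreadth_le_of_isTreeDecomp {V ι : Type} {G : SimpleGraph V} {T : SimpleGraph ι}
    {X : ι → Set V} {r : ℕ} (hX : IsTreeDecomp G T X)
    (hr : ∀ i, ∃ c, ∀ u ∈ X i, G.dist u c ≤ r) : treeBreadth G ≤ r :=
  Nat.sInf_le ⟨ι, T, X, hX, hr⟩

/-- For every finite connected graph `G` and start vertex `s`, the tree-breadth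
satisfies `tb(G) ≤ R_s(G) + 1`, and consequently `tb(G) ≤ Δ_s(G) + 1`. -/
theorem treeBreadth_le_clusterRadius_add_one {V : Type} [Fintype V]
    (G : SimpleGraph V) (hG : G.Connected) (s : V) :
    treeBreadth G ≤ clusterRadius G s + 1 ∧
      treeBreadth G ≤ clusterDiameter G s + 1 := by
  have hradius : treeBreadth G ≤ clusterRadius G s + 1 := by
    refine treeBreadth_le_of_isTreeDecomp (LayeringPartition.isTreeDecomp_bag hG s) fun c => ?_
    obtain ⟨u, rfl⟩ := Quotient.exists_rep c
    obtain ⟨x, hx⟩ := exists_center_dist_le_clusterRadius G s u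
    exact ⟨x, fun w hw => LayeringPartition.dist_le_of_mem_bag hx hw⟩
  exact ⟨hradius, hradius.trans (Nat.add_le_add_right (clusterRadius_le_clusterDiameter G s) 1)⟩
end

section
/- For every finite connected graph G and any start vertex s, R_s(G) ≤ 3·tb(G): in any tree-decomposition of G of breadth ρ, every cluster of the layering partition LP(G,s) is contained in a ball of radius 3ρ of G. -/
namespace SimpleGraph

variable {V : Type*} {G : SimpleGraph V}

theorem Walk.reachable_deleteEdges_or (j k : V) {x m : V} (p : G.Walk x m) :
    (G.deleteEdges {s(j, k)}).Reachable j x ∨ (G.deleteEdges {s(j, k)}).Reachable k x →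
      (G.deleteEdges {s(j, k)}).Reachable j m ∨ (G.deleteEdges {s(j, k)}).Reachable k m := by
  induction p with
  | nil => exact id
  | @cons x y m hxy p ih =>
    intro hx
    apply ih
    by_cases he : s(x, y) = s(j, k)
    · rcases Sym2.eq_iff.mp he with ⟨rfl, rfl⟩ | ⟨rfl, rfl⟩
      · exact .inr .rfl
      · exact .inl .rfl
    · have hadj : (G.deleteEdges {s(j, k)}).Adj x y := by
        rw [deleteEdges_adj]
        exact ⟨hxy, he⟩
      exact hx.imp (·.trans hadj.reachable) (·.trans hadj.reachable)

theorem Connected.reachable_deleteEdges_or (hG : G.Connected) (j k m : V) :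
    (G.deleteEdges {s(j, k)}).Reachable j m ∨ (G.deleteEdges {s(j, k)}).Reachable k m :=
  (hG.preconnected j m).some.reachable_deleteEdges_or j k (.inl .rfl)

theorem Walk.exists_adj_of_not_of (Q : V → Prop) {a b : V} (p : G.Walk a b) (ha : ¬Q a)
    (hb : Q b) : ∃ j k, G.Adj j k ∧ Q k ∧ ∃ q : G.Walk a j, ∀ m ∈ q.support, ¬Q m := by
  let S : Set V := {m | ∃ q : G.Walk a m, ∀ x ∈ q.support, ¬Q x}
  have haS : a ∈ S := ⟨.nil, by simpa using ha⟩
  have hbS : b ∉ S := fun ⟨q, hq⟩ => hq b q.end_mem_support hb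
  obtain ⟨d, -, ⟨q, hq⟩, hdS⟩ := p.exists_boundary_dart S haS hbS
  refine ⟨d.fst, d.snd, d.adj, ?_, q, hq⟩
  by_contra hd
  refine hdS ⟨q.concat d.adj, fun x hx => ?_⟩
  rw [Walk.support_concat, List.mem_append, List.mem_singleton] at hx
  rcases hx with hx | rfl
  exacts [hq x hx, hd]

theorem Walk.dist_add_dist_le_length {u v w : V} (p : G.Walk u v)
    (hw : w ∈ p.support) : G.dist u w + G.dist w v ≤ p.length := by
  classical
  rw [← p.take_spec hw, Walk.length_append]
  exact add_le_add (dist_le _) (dist_le _)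

theorem dist_le_two_mul_of_forall_dist_le {B : Set V} {c : V} {ρ : ℕ} (hG : G.Connected)
    (hB : ∀ u ∈ B, G.dist u c ≤ ρ) {x y : V} (hx : x ∈ B) (hy : y ∈ B) :
    G.dist x y ≤ 2 * ρ := by
  calc G.dist x y ≤ G.dist x c + G.dist c y := hG.dist_triangle
    _ ≤ ρ + ρ := add_le_add (hB x hx) (dist_comm.trans_le (hB y hy))
    _ = 2 * ρ := (two_mul ρ).symm

/-- The component of `u` in the subgraph induced by `{w | d(s,u) ≤ d(s,w)}`: the cluster of `u`
is its intersection with the layer of `u`. -/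
def outerComponent (G : SimpleGraph V) (s u : V) : Set V :=
  {w | ∃ p : G.Walk u w, ∀ x ∈ p.support, G.dist s u ≤ G.dist s x}

theorem mem_outerComponent_self (s u : V) : u ∈ G.outerComponent s u :=
  ⟨.nil, by simp⟩

theorem dist_le_of_mem_outerComponent {s u w : V} (hw : w ∈ G.outerComponent s u) :
    G.dist s u ≤ G.dist s w :=
  let ⟨p, hp⟩ := hw
  hp w p.end_mem_support

theorem mem_outerComponent_of_mem_support {s u w x : V} (p : G.Walk u w)
    (hp : ∀ y ∈ p.support, G.dist s u ≤ G.dist s y) (hx : x ∈ p.support) :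
    x ∈ G.outerComponent s u := by
  classical
  exact ⟨p.takeUntil x hx, fun y hy => hp y (p.support_takeUntil_subset_support hx hy)⟩

theorem exists_walk_of_mem_outerComponent {s u w w' : V} (hw : w ∈ G.outerComponent s u)
    (hw' : w' ∈ G.outerComponent s u) :
    ∃ p : G.Walk w w', ∀ x ∈ p.support, x ∈ G.outerComponent s u := by
  obtain ⟨q, hq⟩ := hw
  obtain ⟨q', hq'⟩ := hw'
  refine ⟨q.reverse.append q', fun x hx => ?_⟩
  rw [Walk.mem_support_append_iff, Walk.support_reverse, List.mem_reverse] at hx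
  rcases hx with hx | hx
  exacts [mem_outerComponent_of_mem_support q hq hx, mem_outerComponent_of_mem_support q' hq' hx]

end SimpleGraph

open SimpleGraph

namespace IsTreeDecomp

variable {V ι : Type} {G : SimpleGraph V} {T : SimpleGraph ι} {X : ι → Set V}

theorem mem_inter_of_reachable_deleteEdges (htd : IsTreeDecomp G T X) {j k m m' : ι}
    (hjk : T.Adj j k) (hm : (T.deleteEdges {s(j, k)}).Reachable j m)
    (hm' : (T.deleteEdges {s(j, k)}).Reachable k m') {x : V} (hx : x ∈ X m) (hx' : x ∈ X m') :
    x ∈ X j ∩ X k := by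
  obtain ⟨q, hq⟩ := htd.1.connected.exists_isPath m m'
  have hbridge : T.IsBridge s(j, k) := isAcyclic_iff_forall_adj_isBridge.mp htd.1.isAcyclic hjk
  have hjkq : s(j, k) ∈ q.edges := q.mem_edges_of_not_reachable_deleteEdges fun hmm' =>
    hbridge (hm.trans (hmm'.trans hm'.symm))
  exact ⟨htd.2.2.2 x m m' hx hx' q hq j (q.fst_mem_support_of_mem_edges hjkq),
    htd.2.2.2 x m m' hx hx' q hq k (q.snd_mem_support_of_mem_edges hjkq)⟩

/-- `X j ∩ X k` separates the vertices in bags on the two sides of the tree edge `jk`. -/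
theorem exists_mem_support_mem_inter (htd : IsTreeDecomp G T X) {j k : ι} (hjk : T.Adj j k)
    {x y : V} (w : G.Walk x y) (hx : ∃ m, x ∈ X m ∧ (T.deleteEdges {s(j, k)}).Reachable j m)
    (hy : ∃ m, y ∈ X m ∧ (T.deleteEdges {s(j, k)}).Reachable k m) :
    ∃ a ∈ w.support, a ∈ X j ∩ X k := by
  induction w with
  | nil =>
    obtain ⟨m, hxm, hm⟩ := hx
    obtain ⟨m', hxm', hm'⟩ := hy
    exact ⟨_, Walk.start_mem_support _, htd.mem_inter_of_reachable_deleteEdges hjk hm hm' hxm hxm'⟩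
  | @cons x z y hxz w ih =>
    obtain ⟨m, hxm, hm⟩ := hx
    obtain ⟨n, hxn, hzn⟩ := htd.2.2.1 x z hxz
    rcases htd.1.connected.reachable_deleteEdges_or j k n with hn | hn
    · obtain ⟨a, ha, haX⟩ := ih ⟨n, hzn, hn⟩ hy
      exact ⟨a, List.mem_cons_of_mem _ ha, haX⟩
    · exact ⟨x, Walk.start_mem_support _, htd.mem_inter_of_reachable_deleteEdges hjk hm hn hxm hxn⟩

theorem reachable_deleteEdges_of_mem_outerComponent (htd : IsTreeDecomp G T X) {j k m : ι}
    (hjk : T.Adj j k) {s u w w' : V} (hj : ∀ a ∈ X j, a ∉ G.outerComponent s u)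
    (hw : w ∈ X k ∩ G.outerComponent s u) (hw' : w' ∈ X m ∩ G.outerComponent s u) :
    (T.deleteEdges {s(j, k)}).Reachable k m := by
  refine (htd.1.connected.reachable_deleteEdges_or j k m).resolve_left fun hm => ?_
  obtain ⟨p, hp⟩ := exists_walk_of_mem_outerComponent hw'.2 hw.2
  obtain ⟨a, ha, haj, -⟩ := htd.exists_mem_support_mem_inter hjk p ⟨m, hw'.1, hm⟩ ⟨k, hw.1, .rfl⟩
  exact hj a haj (hp a ha)

theorem exists_center_of_adj (htd : IsTreeDecomp G T X) (hG : G.Connected) {ρ : ℕ}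
    (hX : ∀ i, ∃ c, ∀ u ∈ X i, G.dist u c ≤ ρ) {j k ts : ι} (hjk : T.Adj j k)
    (hts : (T.deleteEdges {s(j, k)}).Reachable j ts) {s u : V} (hs : s ∈ X ts)
    (hj : ∀ a ∈ X j, a ∉ G.outerComponent s u) (hk : (X k ∩ G.outerComponent s u).Nonempty) :
    ∃ c, ∀ v, SameCluster G s u v → G.dist v c ≤ 3 * ρ := by
  obtain ⟨w, hw⟩ := hk
  obtain ⟨c, hc⟩ := hX k
  refine ⟨c, fun v ⟨hsv, hv⟩ => ?_⟩
  obtain ⟨m, hvm⟩ := htd.2.1 v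
  have hm := htd.reachable_deleteEdges_of_mem_outerComponent hjk hj hw ⟨hvm, hv⟩
  obtain ⟨p, hp⟩ := (hG.preconnected s v).exists_walk_length_eq_dist
  obtain ⟨a, ha, -, hak⟩ := htd.exists_mem_support_mem_inter hjk p ⟨ts, hs, hts⟩ ⟨m, hvm, hm⟩
  have hsav : G.dist s a + G.dist a v ≤ G.dist s u := hsv ▸ hp ▸ p.dist_add_dist_le_length ha
  have hsw : G.dist s u ≤ G.dist s a + G.dist a w :=
    (dist_le_of_mem_outerComponent hw.2).trans hG.dist_triangle
  have haw := dist_le_two_mul_of_forall_dist_le hG hc hak hw.1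
  calc G.dist v c ≤ G.dist v a + G.dist a c := hG.dist_triangle
    _ ≤ 2 * ρ + ρ := add_le_add (by rw [dist_comm]; omega) (hc a hak)
    _ = 3 * ρ := by ring

theorem exists_center_of_sameCluster (htd : IsTreeDecomp G T X) (hG : G.Connected) {ρ : ℕ}
    (hX : ∀ i, ∃ c, ∀ u ∈ X i, G.dist u c ≤ ρ) (s u : V) :
    ∃ c, ∀ v, SameCluster G s u v → G.dist v c ≤ 3 * ρ := by
  obtain ⟨ts, hts⟩ := htd.2.1 s
  by_cases hsA : ∃ m, s ∈ X m ∧ (X m ∩ G.outerComponent s u).Nonempty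
  · obtain ⟨m, hsm, w, hwm, hw⟩ := hsA
    obtain ⟨c, hc⟩ := hX m
    refine ⟨s, fun v hv => ?_⟩
    calc G.dist v s = G.dist s u := dist_comm.trans hv.1.symm
      _ ≤ G.dist s w := dist_le_of_mem_outerComponent hw
      _ ≤ 2 * ρ := dist_le_two_mul_of_forall_dist_le hG hc hsm hwm
      _ ≤ 3 * ρ := by omega
  · obtain ⟨tu, htu⟩ := htd.2.1 u
    obtain ⟨j, k, hjk, hk, q, hq⟩ := (htd.1.connected.preconnected ts tu).some.exists_adj_of_not_of
      (fun m => (X m ∩ G.outerComponent s u).Nonempty) (fun h => hsA ⟨ts, hts, h⟩)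
      ⟨u, htu, mem_outerComponent_self s u⟩
    have hjkq : s(j, k) ∉ q.reverse.edges := by
      simpa using fun h => hq k (q.snd_mem_support_of_mem_edges h) hk
    exact htd.exists_center_of_adj hG hX hjk
      (reachable_deleteEdges_iff_exists_walk.mpr ⟨q.reverse, hjkq⟩) hts
      (fun a ha haA => hq j q.end_mem_support ⟨a, ha, haA⟩) hk

end IsTreeDecomp

theorem isTreeDecomp_univ {V : Type} (G : SimpleGraph V) :
    IsTreeDecomp G (⊥ : SimpleGraph Unit) fun _ => Set.univ :=
  ⟨.of_subsingleton, fun _ => ⟨(), trivial⟩, fun _ _ _ => ⟨(), trivial, trivial⟩,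
    fun _ _ _ _ _ _ _ _ _ => trivial⟩

theorem exists_isTreeDecomp_breadth_le_treeBreadth {V : Type} [Fintype V] (G : SimpleGraph V)
    (c : V) : ∃ (ι : Type) (T : SimpleGraph ι) (X : ι → Set V),
      IsTreeDecomp G T X ∧ ∀ i, ∃ c, ∀ u ∈ X i, G.dist u c ≤ treeBreadth G := by
  refine Nat.sInf_mem (s := {r | ∃ (ι : Type) (T : SimpleGraph ι) (X : ι → Set V),
    IsTreeDecomp G T X ∧ ∀ i, ∃ c, ∀ u ∈ X i, G.dist u c ≤ r}) ?_
  exact ⟨Finset.univ.sup (G.dist · c), Unit, ⊥, _, isTreeDecomp_univ G,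
    fun _ => ⟨c, fun u _ => Finset.le_sup (f := (G.dist · c)) (Finset.mem_univ u)⟩⟩

/-- In any tree-decomposition of `G` of breadth `ρ`, every cluster of the layering
partition `LP(G,s)` is contained in a ball of radius `3ρ` of `G`; consequently
`R_s(G) ≤ 3·tb(G)`. -/
theorem clusterRadius_le_three_mul_treeBreadth {V : Type} [Fintype V]
    (G : SimpleGraph V) (hG : G.Connected) (s : V) :
    (∀ (ι : Type) (T : SimpleGraph ι) (X : ι → Set V) (ρ : ℕ),
      IsTreeDecomp G T X → (∀ i, ∃ c, ∀ u ∈ X i, G.dist u c ≤ ρ) →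
      ∀ u : V, ∃ c : V, ∀ v, SameCluster G s u v → G.dist v c ≤ 3 * ρ) ∧
    clusterRadius G s ≤ 3 * treeBreadth G := by
  refine ⟨fun _ _ _ _ htd hX u => htd.exists_center_of_sameCluster hG hX s u,
    Nat.sInf_le fun u => ?_⟩
  obtain ⟨ι, T, X, htd, hX⟩ := exists_isTreeDecomp_breadth_le_treeBreadth G s
  obtain ⟨c, hc⟩ := htd.exists_center_of_sameCluster hG hX s u
  exact ⟨c, fun v hv => dist_comm.trans_le (hc v hv)⟩
end

section
/- For every finite connected graph G, tl(G) ≤ ts(G) and tb(G) ≤ ⌈ts(G)/2⌉, where ts(G) is the tree-stretch of G. -/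
/-- The tree-stretch `ts(G)`: the least `t` such that `G` has a spanning tree `T`
(a subgraph of `G` that is a tree) with `d_T(u,v) ≤ t·d_G(u,v)` for all `u, v`. -/
noncomputable def treeStretch {V : Type} (G : SimpleGraph V) : ℕ :=
  sInf {t : ℕ | ∃ T : SimpleGraph V, T ≤ G ∧ T.IsTree ∧
    ∀ u v, T.dist u v ≤ t * G.dist u v}

/-!
Take a spanning tree `T` of `G` with stretch `t = ts(G)`, rooted at some vertex `r`, and index a
tree-decomposition by `T` itself: the bag of `i` consists of the vertices within `⌊t/2⌋` of `i`
in `T` or within `⌈t/2⌉ - 1` of the parent of `i`. The ends of an edge of `G` are at `T`-distance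
at most `t`, so the middle vertex of the `T`-path between them, or for odd `t` the child end of its
middle edge, has a bag containing both. A vertex lying in the bags of `i` and `j` is within
`⌊t/2⌋ + 1` of both, hence, `T` being a tree, within `⌊t/2⌋` of every inner vertex of the path
from `i` to `j`. Each bag has `T`-diameter at most `t` and lies in the `T`-ball of radius
`⌈t/2⌉` around `i`, and `d_G ≤ d_T`.
-/

namespace SimpleGraph

variable {V : Type} {G T : SimpleGraph V}

namespace Walk

lemma dist_add_dist_le_length_s12 {u v z : V} (p : G.Walk u v) (hz : z ∈ p.support) :
    G.dist u z + G.dist z v ≤ p.length := by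
  classical
  calc G.dist u z + G.dist z v ≤ (p.takeUntil z hz).length + (p.dropUntil z hz).length :=
        add_le_add (dist_le _) (dist_le _)
    _ = p.length := by rw [← length_append, take_spec]

lemma dist_getVert_le {u v : V} (p : G.Walk u v) (n : ℕ) : G.dist u (p.getVert n) ≤ n :=
  (dist_le (p.take n)).trans (by simp [take_length])

lemma dist_getVert_le_length_sub {u v : V} (p : G.Walk u v) (n : ℕ) :
    G.dist (p.getVert n) v ≤ p.length - n :=
  (dist_le (p.drop n)).trans_eq (drop_length p n)

end Walk

namespace IsTree

lemma mem_support_or_mem_support (hT : T.IsTree) {v i j z : V} {p : T.Walk i j}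
    (hp : p.IsPath) (hz : z ∈ p.support) (q₁ : T.Walk v i) (q₂ : T.Walk v j) :
    z ∈ q₁.support ∨ z ∈ q₂.support := by
  classical
  have hbypass : p = (q₁.reverse.append q₂).bypass :=
    (hT.existsUnique_path i j).unique hp (Walk.bypass_isPath _)
  have hz' := Walk.support_bypass_subset_support _ (hbypass ▸ hz)
  rwa [Walk.mem_support_append_iff, Walk.support_reverse, List.mem_reverse] at hz'

lemma dist_lt_max_of_mem_support (hT : T.IsTree) (v : V) {i j z : V} {p : T.Walk i j}
    (hp : p.IsPath) (hz : z ∈ p.support) (hzi : z ≠ i) (hzj : z ≠ j) :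
    T.dist v z < max (T.dist v i) (T.dist v j) := by
  obtain ⟨q₁, -, hq₁⟩ := hT.connected.exists_path_of_dist v i
  obtain ⟨q₂, -, hq₂⟩ := hT.connected.exists_path_of_dist v j
  rcases hT.mem_support_or_mem_support hp hz q₁ q₂ with h | h
  · have := q₁.dist_add_dist_le_length_s12 h
    have := hT.connected.pos_dist_of_ne hzi
    omega
  · have := q₂.dist_add_dist_le_length_s12 h
    have := hT.connected.pos_dist_of_ne hzj
    omega

/-- The neighbour of `v` on the path from `v` to the root `r`, and `r` itself for `v = r`. -/
noncomputable def parent (hT : T.IsTree) (r v : V) : V :=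
  (hT.existsUnique_path r v).exists.choose.penultimate

lemma parent_eq_penultimate (hT : T.IsTree) {r v : V} {p : T.Walk r v} (hp : p.IsPath) :
    hT.parent r v = p.penultimate := by
  have h := hT.existsUnique_path r v
  rw [parent, h.unique h.exists.choose_spec hp]

lemma dist_parent_le_one (hT : T.IsTree) (r v : V) : T.dist (hT.parent r v) v ≤ 1 := by
  obtain ⟨p, hp, -⟩ := hT.existsUnique_path r v
  rw [hT.parent_eq_penultimate hp]
  by_cases hnil : p.Nil
  · cases hnil
    simp
  · exact (dist_eq_one_iff_adj.mpr (p.adj_penultimate hnil)).le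

lemma parent_eq_or_parent_eq_of_adj (hT : T.IsTree) (r : V) {v w : V} (h : T.Adj v w) :
    hT.parent r w = v ∨ hT.parent r v = w := by
  obtain ⟨p, hp, -⟩ := hT.existsUnique_path r v
  obtain ⟨q, hq, -⟩ := hT.existsUnique_path r w
  rw [hT.parent_eq_penultimate hp, hT.parent_eq_penultimate hq]
  by_cases hv : v ∈ q.support
  · left
    rw [hT.isAcyclic.path_concat hp hq h hv, Walk.penultimate_concat]
  · right
    have hw := hT.isAcyclic.mem_support_of_ne_mem_support_of_adj_of_isPath hp hq h hv
    rw [hT.isAcyclic.path_concat hq hp h.symm hw, Walk.penultimate_concat]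

/-- A path of odd length `t` in `T` has a middle edge `{i, parent i}`: this is why the bag of `i`
also contains a ball around `parent i`. -/
def stretchBag (hT : T.IsTree) (r : V) (t : ℕ) (i : V) : Set V :=
  {u | T.dist u i ≤ t / 2 ∨ T.dist u (hT.parent r i) < (t + 1) / 2}

variable (hT : T.IsTree) (r : V) (t : ℕ)

lemma self_mem_stretchBag (i : V) : i ∈ hT.stretchBag r t i :=
  Or.inl (by simp)

lemma dist_le_of_mem_stretchBag {i u : V} (hu : u ∈ hT.stretchBag r t i) :
    T.dist u i ≤ (t + 1) / 2 := by
  have := hT.connected.dist_triangle (u := u) (v := hT.parent r i) (w := i)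
  have := hT.dist_parent_le_one r i
  rcases hu with hu | hu <;> omega

lemma dist_le_of_mem_stretchBag_of_mem {i u w : V} (hu : u ∈ hT.stretchBag r t i)
    (hw : w ∈ hT.stretchBag r t i) : T.dist u w ≤ t := by
  have := hT.connected.dist_triangle (u := u) (v := i) (w := w)
  have := hT.connected.dist_triangle (u := u) (v := hT.parent r i) (w := w)
  have := hT.connected.dist_triangle (u := u) (v := i) (w := hT.parent r i)
  have := hT.connected.dist_triangle (u := u) (v := hT.parent r i) (w := i)
  have := hT.dist_parent_le_one r i
  have : T.dist i w = T.dist w i := dist_comm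
  have : T.dist (hT.parent r i) w = T.dist w (hT.parent r i) := dist_comm
  have : T.dist i (hT.parent r i) = T.dist (hT.parent r i) i := dist_comm
  rcases hu with hu | hu <;> rcases hw with hw | hw <;> omega

lemma exists_mem_stretchBag_of_dist_le {u w : V} (h : T.dist u w ≤ t) :
    ∃ i, u ∈ hT.stretchBag r t i ∧ w ∈ hT.stretchBag r t i := by
  obtain ⟨q, -, hq⟩ := hT.connected.exists_path_of_dist u w
  have hstart (n : ℕ) : T.dist u (q.getVert n) ≤ n := q.dist_getVert_le n
  have hend (n : ℕ) : T.dist w (q.getVert n) ≤ T.dist u w - n := by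
    rw [dist_comm, ← hq]; exact q.dist_getVert_le_length_sub n
  by_cases hshort : T.dist u w ≤ 2 * (t / 2)
  · refine ⟨q.getVert (t / 2), Or.inl (hstart _), Or.inl ?_⟩
    have := hend (t / 2)
    omega
  · -- `t` is odd and the middle edge of `q` is `{i, parent i}` for one of its endpoints `i`
    have hadj : T.Adj (q.getVert (t / 2)) (q.getVert (t / 2 + 1)) :=
      q.adj_getVert_succ (by omega)
    have h₁ := hstart (t / 2)
    have h₂ := hend (t / 2 + 1)
    rcases hT.parent_eq_or_parent_eq_of_adj r hadj with h | h
    · exact ⟨_, Or.inr (by rw [h]; omega), Or.inl (by omega)⟩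
    · exact ⟨_, Or.inl h₁, Or.inr (by rw [h]; omega)⟩

lemma mem_stretchBag_of_mem_support {v i j z : V} {p : T.Walk i j} (hp : p.IsPath)
    (hz : z ∈ p.support) (hi : v ∈ hT.stretchBag r t i) (hj : v ∈ hT.stretchBag r t j) :
    v ∈ hT.stretchBag r t z := by
  by_cases hzi : z = i
  · exact hzi ▸ hi
  by_cases hzj : z = j
  · exact hzj ▸ hj
  have := hT.dist_lt_max_of_mem_support v hp hz hzi hzj
  have := hT.dist_le_of_mem_stretchBag r t hi
  have := hT.dist_le_of_mem_stretchBag r t hj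
  exact Or.inl (by omega)

lemma isTreeDecomp_stretchBag {G : SimpleGraph V} (hG : ∀ u w, G.Adj u w → T.dist u w ≤ t) :
    IsTreeDecomp G T (hT.stretchBag r t) :=
  ⟨hT, fun v ↦ ⟨v, hT.self_mem_stretchBag r t v⟩,
    fun u w h ↦ hT.exists_mem_stretchBag_of_dist_le r t (hG u w h),
    fun _ _ _ hi hj _ hp _ hz ↦ hT.mem_stretchBag_of_mem_support r t hp hz hi hj⟩

end IsTree

lemma Connected.exists_isTree_le_dist_le_treeStretch_mul [Fintype V] (hG : G.Connected) :
    ∃ T ≤ G, T.IsTree ∧ ∀ u v, T.dist u v ≤ treeStretch G * G.dist u v := by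
  refine Nat.sInf_mem (s := {t | ∃ T ≤ G, T.IsTree ∧ ∀ u v, T.dist u v ≤ t * G.dist u v}) ?_
  obtain ⟨T, hTG, hT⟩ := hG.exists_isTree_le
  refine ⟨Fintype.card V, T, hTG, hT, fun u v ↦ ?_⟩
  rcases eq_or_ne u v with rfl | huv
  · simp
  obtain ⟨p, hp, hpl⟩ := hT.connected.exists_path_of_dist u v
  calc T.dist u v ≤ Fintype.card V := hpl ▸ hp.length_lt.le
    _ ≤ Fintype.card V * G.dist u v := Nat.le_mul_of_pos_right _ (hG.pos_dist_of_ne huv)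

end SimpleGraph

/-- For every finite connected graph `G`, `tl(G) ≤ ts(G)` and `tb(G) ≤ ⌈ts(G)/2⌉`. -/
theorem treeLength_le_treeStretch_and_treeBreadth_le {V : Type} [Fintype V]
    (G : SimpleGraph V) (hG : G.Connected) :
    treeLength G ≤ treeStretch G ∧ treeBreadth G ≤ (treeStretch G + 1) / 2 := by
  obtain ⟨T, hTG, hT, hstretch⟩ := hG.exists_isTree_le_dist_le_treeStretch_mul
  obtain ⟨r⟩ := hG.nonempty
  have hdecomp : IsTreeDecomp G T (hT.stretchBag r (treeStretch G)) :=
    hT.isTreeDecomp_stretchBag r _ fun u w h ↦ by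
      simpa [SimpleGraph.dist_eq_one_iff_adj.mpr h] using hstretch u w
  have hdist (u w : V) : G.dist u w ≤ T.dist u w := (hT.connected u w).dist_anti hTG
  constructor
  · exact Nat.sInf_le ⟨V, T, _, hdecomp, fun i u hu w hw ↦
      (hdist u w).trans (hT.dist_le_of_mem_stretchBag_of_mem r _ hu hw)⟩
  · exact Nat.sInf_le ⟨V, T, _, hdecomp, fun i ↦ ⟨i, fun u hu ↦
      (hdist u i).trans (hT.dist_le_of_mem_stretchBag r _ hu)⟩⟩
end

section
/- In a δ-hyperbolic graph G, if v is a vertex farthest from an arbitrary vertex u, and w is a vertex farthest from v, then d_G(v,w) ≥ diam(G) − 2δ. -/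
/-- In a `δ`-hyperbolic finite connected graph `G`, if `v` is a vertex farthest from an
arbitrary vertex `u` and `w` is a vertex farthest from `v`, then
`d_G(v,w) ≥ diam(G) − 2δ`. -/
theorem two_bfs_dist_ge_diam_sub_hyperbolicity {V : Type*} [Fintype V] [Nonempty V]
    (G : SimpleGraph V) (hG : G.Connected) (δ : ℝ) (hδ : 0 ≤ δ)
    (hhyp : ∀ a b c d : V, graphDelta4 G a b c d ≤ δ)
    (u v w : V)
    (hv : ∀ x, G.dist u x ≤ G.dist u v)
    (hw : ∀ x, G.dist v x ≤ G.dist v w) :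
    ((sSup {n : ℕ | ∃ x y, G.dist x y = n} : ℕ) : ℝ) - 2 * δ ≤ (G.dist v w : ℝ) := by
  classical
  have hfin : ({n : ℕ | ∃ x y, G.dist x y = n}).Finite := by
    have hsub : {n : ℕ | ∃ x y, G.dist x y = n} ⊆
        Set.range (fun p : V × V => G.dist p.1 p.2) := by
      rintro n ⟨x, y, rfl⟩; exact ⟨(x, y), rfl⟩
    exact (Set.finite_range _).subset hsub
  have hne : ({n : ℕ | ∃ x y, G.dist x y = n}).Nonempty := ⟨G.dist u u, u, u, rfl⟩
  obtain ⟨x, y, hxy⟩ := Nat.sSup_mem hne hfin.bddAbove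
  rw [← hxy]
  have h := hhyp u v x y
  simp only [graphDelta4] at h
  have hux : (G.dist u x : ℝ) ≤ G.dist u v := by exact_mod_cast hv x
  have huy : (G.dist u y : ℝ) ≤ G.dist u v := by exact_mod_cast hv y
  have hvx : (G.dist v x : ℝ) ≤ G.dist v w := by exact_mod_cast hw x
  have hvy : (G.dist v y : ℝ) ≤ G.dist v w := by exact_mod_cast hw y
  set A : ℝ := (G.dist u v : ℝ) + (G.dist x y : ℝ) with hA
  set B : ℝ := (G.dist u x : ℝ) + (G.dist v y : ℝ) with hB
  set C : ℝ := (G.dist u y : ℝ) + (G.dist v x : ℝ) with hC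
  have hBle : B ≤ (G.dist u v : ℝ) + (G.dist v w : ℝ) := by rw [hB]; linarith
  have hCle : C ≤ (G.dist u v : ℝ) + (G.dist v w : ℝ) := by rw [hC]; linarith
  have key : A ≤ max B C + 2 * δ := by
    rcases le_or_gt A (max B C) with h1 | h1
    · linarith
    · have hmax : max A (max B C) = A := max_eq_left h1.le
      have hmin : min A (min B C) = min B C :=
        min_eq_right ((min_le_left B C).trans ((le_max_left B C).trans h1.le))
      rw [hmax, hmin] at h
      rcases le_total B C with h3 | h3
      · rw [min_eq_left h3] at h; rw [max_eq_right h3]; linarith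
      · rw [min_eq_right h3] at h; rw [max_eq_left h3]; linarith
  have hmaxle : max B C ≤ (G.dist u v : ℝ) + (G.dist v w : ℝ) := max_le hBle hCle
  have : A = (G.dist u v : ℝ) + (G.dist x y : ℝ) := hA
  linarith
end

section
/- For every finite connected graph G, the hyperbolicity of G is attained on a quadruple of vertices lying in a common biconnected component: if x,y,z,w realize the maximum hyperbolicity δ(G) > 0, then there exists a quadruple within a single biconnected component of G achieving hyperbolicity at least δ(G). In particular, if every biconnected component of G is a single edge (i.e., G is a tree), then δ(G) = 0. -/
/-- A set `B` of vertices induces a biconnected subgraph: the induced subgraph is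
connected and removing any single vertex keeps it (pre)connected. -/
def IsBiconnectedSet {V : Type*} (G : SimpleGraph V) (B : Set V) : Prop :=
  (G.induce B).Connected ∧ ∀ c ∈ B, (G.induce (B \ {c})).Preconnected

/-- A biconnected component: a maximal set of vertices inducing a biconnected
subgraph. -/
def IsBiconnectedComponent {V : Type*} (G : SimpleGraph V) (B : Set V) : Prop :=
  IsBiconnectedSet G B ∧ ∀ B', B ⊆ B' → IsBiconnectedSet G B' → B' = B

/-!
Let `S` be a geodesically convex set of vertices that is not biconnected, with cut vertex `c`.
Then `c` lies on every geodesic joining two different branches of `S` at `c` (a component of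
`S - c` together with `c`), and every branch is again geodesically convex. Of four points of `S`,
either three lie in one branch, or they split into two pairs lying in different branches. In the
first case the fourth point `x`, if it is outside that branch, may be moved to `c`: its distances
to the other three exceed those of `c` by `d(x, c)`, so all three distance sums shift by the same
amount and the hyperbolicity of the quadruple does not change, while the quadruple now lies in a
smaller convex set. In the second case the two larger distance sums coincide and the
hyperbolicity is `0`. Induction on `S` thus ends in a biconnected set. In a tree every edge is a
bridge, so a biconnected set has at most two vertices, and four points taken from two vertices
have hyperbolicity `0`.
-/

open SimpleGraph

noncomputable def fourPointGap (A B C : ℝ) : ℝ :=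
  (2 * max A (max B C) + min A (min B C) - (A + B + C)) / 2

section FourPointGap

variable (A B C : ℝ)

theorem fourPointGap_comm_left : fourPointGap A B C = fourPointGap B A C := by
  unfold fourPointGap
  rw [max_left_comm, min_left_comm]
  ring

theorem fourPointGap_comm_right : fourPointGap A B C = fourPointGap A C B := by
  unfold fourPointGap
  rw [max_comm B, min_comm B]
  ring

theorem fourPointGap_nonneg : 0 ≤ fourPointGap A B C := by
  unfold fourPointGap
  rcases le_total A B with h₁ | h₁ <;> rcases le_total B C with h₂ | h₂ <;>
    rcases le_total A C with h₃ | h₃ <;> simp [h₁, h₂, h₃] <;> linarith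

theorem fourPointGap_const_add (k : ℝ) :
    fourPointGap (k + A) (k + B) (k + C) = fourPointGap A B C := by
  unfold fourPointGap
  rw [max_add_add_left, max_add_add_left, min_add_add_left, min_add_add_left]
  ring

variable {A B} in
theorem fourPointGap_eq_zero_of_le (h : A ≤ B) : fourPointGap A B B = 0 := by
  unfold fourPointGap
  rw [max_self, max_eq_right h, min_self, min_eq_left h]
  ring

end FourPointGap

section Delta

variable {V : Type*} {G : SimpleGraph V}

theorem graphDelta4_eq_fourPointGap (a b c d : V) :
    graphDelta4 G a b c d =
      fourPointGap (G.dist a b + G.dist c d) (G.dist a c + G.dist b d)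
        (G.dist a d + G.dist b c) := rfl

theorem graphDelta4_nonneg (a b c d : V) : 0 ≤ graphDelta4 G a b c d :=
  fourPointGap_nonneg _ _ _

theorem graphDelta4_comm12 (a b c d : V) : graphDelta4 G a b c d = graphDelta4 G b a c d := by
  rw [graphDelta4_eq_fourPointGap, graphDelta4_eq_fourPointGap, fourPointGap_comm_right,
    G.dist_comm (u := b) (v := a)]
  ring_nf

theorem graphDelta4_comm23 (a b c d : V) : graphDelta4 G a b c d = graphDelta4 G a c b d := by
  rw [graphDelta4_eq_fourPointGap, graphDelta4_eq_fourPointGap, fourPointGap_comm_left,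
    G.dist_comm (u := c) (v := b)]

theorem graphDelta4_comm34 (a b c d : V) : graphDelta4 G a b c d = graphDelta4 G a b d c := by
  rw [graphDelta4_eq_fourPointGap, graphDelta4_eq_fourPointGap, fourPointGap_comm_right,
    G.dist_comm (u := d) (v := c)]

variable {x y z w c : V}

theorem graphDelta4_eq_of_dist_eq_add (hy : G.dist x y = G.dist x c + G.dist c y)
    (hz : G.dist x z = G.dist x c + G.dist c z) (hw : G.dist x w = G.dist x c + G.dist c w) :
    graphDelta4 G x y z w = graphDelta4 G c y z w := by
  simp only [graphDelta4_eq_fourPointGap, hy, hz, hw, Nat.cast_add, add_assoc]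
  exact fourPointGap_const_add _ _ _ _

theorem graphDelta4_eq_zero_of_dist_eq_add (hG : G.Connected)
    (hxz : G.dist x z = G.dist x c + G.dist c z) (hxw : G.dist x w = G.dist x c + G.dist c w)
    (hyz : G.dist y z = G.dist y c + G.dist c z) (hyw : G.dist y w = G.dist y c + G.dist c w) :
    graphDelta4 G x y z w = 0 := by
  have hxy : G.dist x y ≤ G.dist x c + G.dist y c := by
    have := hG.dist_triangle (u := x) (v := c) (w := y)
    rwa [G.dist_comm (u := c)] at this
  have hzw : G.dist z w ≤ G.dist c z + G.dist c w := by
    have := hG.dist_triangle (u := z) (v := c) (w := w)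
    rwa [G.dist_comm (u := z) (v := c)] at this
  rw [graphDelta4_eq_fourPointGap, hxz, hxw, hyz, hyw]
  push_cast
  rw [show (G.dist x c + G.dist c w + (G.dist y c + G.dist c z) : ℝ) =
    G.dist x c + G.dist c z + (G.dist y c + G.dist c w) by ring]
  exact fourPointGap_eq_zero_of_le (by exact_mod_cast (by omega : G.dist x y + G.dist z w ≤ _))

theorem graphDelta4_eq_zero_of_mem_pair {u v a b c d : V} (ha : a ∈ ({u, v} : Set V))
    (hb : b ∈ ({u, v} : Set V)) (hc : c ∈ ({u, v} : Set V)) (hd : d ∈ ({u, v} : Set V)) :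
    graphDelta4 G a b c d = 0 := by
  simp only [Set.mem_insert_iff, Set.mem_singleton_iff] at ha hb hc hd
  rcases ha with rfl | rfl <;> rcases hb with rfl | rfl <;> rcases hc with rfl | rfl <;>
    rcases hd with rfl | rfl <;>
    simp [graphDelta4, G.dist_comm] <;> ring_nf

end Delta

section Convexity

variable {V : Type*} {G : SimpleGraph V}

theorem SimpleGraph.Walk.dist_add_dist_of_length_eq_dist (hG : G.Connected) {u v t : V}
    {p : G.Walk u v} (hp : p.length = G.dist u v) (ht : t ∈ p.support) :
    G.dist u t + G.dist t v = G.dist u v := by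
  classical
  have hsplit := congrArg Walk.length (p.take_spec ht)
  rw [Walk.length_append] at hsplit
  have h₁ := dist_le (p.takeUntil t ht)
  have h₂ := dist_le (p.dropUntil t ht)
  have h₃ : G.dist u v ≤ G.dist u t + G.dist t v := hG.dist_triangle
  omega

def IsGeodesicallyConvex (G : SimpleGraph V) (S : Set V) : Prop :=
  ∀ ⦃u v⦄, u ∈ S → v ∈ S → ∀ p : G.Walk u v, p.length = G.dist u v → ∀ t ∈ p.support, t ∈ S

theorem isGeodesicallyConvex_univ (G : SimpleGraph V) : IsGeodesicallyConvex G Set.univ :=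
  fun _ _ _ _ _ _ _ _ ↦ trivial

def ReachableWithin (G : SimpleGraph V) (S : Set V) (u v : V) : Prop :=
  ∃ (hu : u ∈ S) (hv : v ∈ S), (G.induce S).Reachable ⟨u, hu⟩ ⟨v, hv⟩

namespace ReachableWithin

variable {S : Set V} {u v t : V}

theorem mem_left (h : ReachableWithin G S u v) : u ∈ S := h.1

theorem mem_right (h : ReachableWithin G S u v) : v ∈ S := h.2.1

theorem symm (h : ReachableWithin G S u v) : ReachableWithin G S v u :=
  ⟨h.2.1, h.1, h.2.2.symm⟩

theorem trans (h₁ : ReachableWithin G S u v) (h₂ : ReachableWithin G S v t) :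
    ReachableWithin G S u t :=
  ⟨h₁.1, h₂.2.1, h₁.2.2.trans h₂.2.2⟩

end ReachableWithin

theorem SimpleGraph.Walk.reachableWithin {S : Set V} {u v : V} (p : G.Walk u v)
    (hp : ∀ t ∈ p.support, t ∈ S) : ReachableWithin G S u v :=
  ⟨_, _, ⟨p.induce S hp⟩⟩

variable {S : Set V}

theorem IsGeodesicallyConvex.connected_induce (hS : IsGeodesicallyConvex G S) (hG : G.Connected)
    (hne : S.Nonempty) : (G.induce S).Connected := by
  have : Nonempty S := hne.to_subtype
  refine (connected_iff _).2 ⟨fun u v ↦ ?_, this⟩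
  obtain ⟨p, hp⟩ := hG.exists_walk_length_eq_dist u v
  obtain ⟨_, _, h⟩ := p.reachableWithin (hS u.2 v.2 p hp)
  exact h

theorem IsGeodesicallyConvex.dist_eq_add_of_not_reachableWithin (hS : IsGeodesicallyConvex G S)
    (hG : G.Connected) {c u v : V} (hu : u ∈ S) (hv : v ∈ S)
    (h : ¬ReachableWithin G (S \ {c}) u v) : G.dist u v = G.dist u c + G.dist c v := by
  obtain ⟨p, hp⟩ := hG.exists_walk_length_eq_dist u v
  have hc : c ∈ p.support := by
    by_contra hc
    exact h (p.reachableWithin fun t ht ↦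
      ⟨hS hu hv p hp t ht, fun htc ↦ hc (Set.mem_singleton_iff.1 htc ▸ ht)⟩)
  exact (p.dist_add_dist_of_length_eq_dist hG hp hc).symm

def branch (G : SimpleGraph V) (S : Set V) (c a : V) : Set V :=
  insert c {v | ReachableWithin G (S \ {c}) a v}

variable {c a : V}

theorem branch_subset (hc : c ∈ S) : branch G S c a ⊆ S :=
  Set.insert_subset hc fun _ hv ↦ hv.mem_right.1

theorem branch_ssubset (hc : c ∈ S) (hcut : ¬(G.induce (S \ {c})).Preconnected) :
    branch G S c a ⊂ S := by
  refine (branch_subset hc).ssubset_of_not_subset fun hsub ↦ hcut fun p q ↦ ?_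
  have hmem (p : ↥(S \ {c})) : ReachableWithin G (S \ {c}) a p :=
    (hsub p.2.1).resolve_left p.2.2
  obtain ⟨_, _, h⟩ := (hmem p).symm.trans (hmem q)
  exact h

theorem not_reachableWithin_of_mem_branch {s t : V} (hs : s ∈ branch G S c a)
    (ht : t ∉ branch G S c a) : ¬ReachableWithin G (S \ {c}) s t := by
  rintro hst
  rcases hs with rfl | has
  · exact hst.mem_left.2 rfl
  · exact ht (Or.inr (has.trans hst))

theorem IsGeodesicallyConvex.dist_eq_add_of_not_mem_branch (hS : IsGeodesicallyConvex G S)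
    (hG : G.Connected) (hc : c ∈ S) {s t : V} (hs : s ∈ branch G S c a) (ht : t ∈ S)
    (htB : t ∉ branch G S c a) : G.dist t s = G.dist t c + G.dist c s :=
  hS.dist_eq_add_of_not_reachableWithin hG ht (branch_subset hc hs)
    fun h ↦ not_reachableWithin_of_mem_branch hs htB h.symm

theorem isGeodesicallyConvex_branch (hS : IsGeodesicallyConvex G S) (hG : G.Connected)
    (hc : c ∈ S) : IsGeodesicallyConvex G (branch G S c a) := by
  intro u v hu hv p hp t ht
  have htS := hS (branch_subset hc hu) (branch_subset hc hv) p hp t ht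
  by_contra htB
  have hut := hS.dist_eq_add_of_not_mem_branch hG hc hu htS htB
  have htv := hS.dist_eq_add_of_not_mem_branch hG hc hv htS htB
  have hgeo := p.dist_add_dist_of_length_eq_dist hG hp ht
  have htri : G.dist u v ≤ G.dist u c + G.dist c v := hG.dist_triangle
  have hct : G.dist c t = 0 := by
    rw [G.dist_comm (u := t) (v := u), G.dist_comm (u := t) (v := c),
      G.dist_comm (u := c) (v := u)] at hut
    rw [G.dist_comm (u := t) (v := c)] at htv
    omega
  exact htB (Or.inl (hG.dist_eq_zero_iff.1 hct).symm)

theorem IsGeodesicallyConvex.graphDelta4_eq_of_not_mem_branch (hS : IsGeodesicallyConvex G S)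
    (hG : G.Connected) (hc : c ∈ S) {x y z w : V} (hx : x ∈ S) (hxB : x ∉ branch G S c a)
    (hy : y ∈ branch G S c a) (hz : z ∈ branch G S c a) (hw : w ∈ branch G S c a) :
    graphDelta4 G x y z w = graphDelta4 G c y z w :=
  graphDelta4_eq_of_dist_eq_add (hS.dist_eq_add_of_not_mem_branch hG hc hy hx hxB)
    (hS.dist_eq_add_of_not_mem_branch hG hc hz hx hxB)
    (hS.dist_eq_add_of_not_mem_branch hG hc hw hx hxB)

theorem IsGeodesicallyConvex.graphDelta4_eq_zero_of_not_reachableWithin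
    (hS : IsGeodesicallyConvex G S) (hG : G.Connected) {x y z w : V} (hx : x ∈ S) (hy : y ∈ S)
    (hz : z ∈ S) (hw : w ∈ S) (hxz : ¬ReachableWithin G (S \ {c}) x z)
    (hxw : ¬ReachableWithin G (S \ {c}) x w) (hyz : ¬ReachableWithin G (S \ {c}) y z)
    (hyw : ¬ReachableWithin G (S \ {c}) y w) : graphDelta4 G x y z w = 0 :=
  graphDelta4_eq_zero_of_dist_eq_add hG (hS.dist_eq_add_of_not_reachableWithin hG hx hz hxz)
    (hS.dist_eq_add_of_not_reachableWithin hG hx hw hxw)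
    (hS.dist_eq_add_of_not_reachableWithin hG hy hz hyz)
    (hS.dist_eq_add_of_not_reachableWithin hG hy hw hyw)

end Convexity

theorem related_triple_or_unrelated_pairs {α : Type*} {R : α → α → Prop}
    (symm : ∀ {a b}, R a b → R b a) (trans : ∀ {a b c}, R a b → R b c → R a c) (a b c d : α) :
    (R b c ∧ R b d) ∨ (R a b ∧ R a c) ∨ (R a b ∧ R a d) ∨ (R a c ∧ R a d) ∨
      (¬R a c ∧ ¬R a d ∧ ¬R b c ∧ ¬R b d) ∨ (¬R a b ∧ ¬R a d ∧ ¬R c b ∧ ¬R c d) ∨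
      (¬R a b ∧ ¬R a c ∧ ¬R d b ∧ ¬R d c) := by
  -- If `R` relates no two of the points, every pairing works; if it relates two of them, it
  -- either relates neither of them to the other two points, or transitivity gives a triple.
  grind

section Biconnected

variable {V : Type*} {G : SimpleGraph V}

theorem isBiconnectedSet_singleton (G : SimpleGraph V) (v : V) : IsBiconnectedSet G {v} :=
  ⟨(connected_iff _).2 ⟨Preconnected.of_subsingleton, ⟨⟨v, rfl⟩⟩⟩,
    fun _ hc ⟨_, ha, hac⟩ _ ↦ (hac (ha.trans hc.symm)).elim⟩

theorem IsBiconnectedSet.exists_isBiconnectedComponent_superset [Finite V] {B₀ : Set V}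
    (h : IsBiconnectedSet G B₀) : ∃ B, IsBiconnectedComponent G B ∧ B₀ ⊆ B := by
  obtain ⟨B, hB₀B, hmax⟩ := Finite.exists_le_maximal h
  exact ⟨B, ⟨hmax.prop, fun B' hBB' hB' ↦ (hmax.eq_of_le hB' hBB').symm⟩, hB₀B⟩

def AttainedOnBiconnectedSet (G : SimpleGraph V) (r : ℝ) : Prop :=
  ∃ B, IsBiconnectedSet G B ∧ ∃ a ∈ B, ∃ b ∈ B, ∃ c ∈ B, ∃ d ∈ B, r ≤ graphDelta4 G a b c d

theorem attainedOnBiconnectedSet_zero (v : V) : AttainedOnBiconnectedSet G 0 :=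
  ⟨{v}, isBiconnectedSet_singleton G v, v, rfl, v, rfl, v, rfl, v, rfl, graphDelta4_nonneg _ _ _ _⟩

theorem IsGeodesicallyConvex.attainedOnBiconnectedSet [Finite V] {S : Set V}
    (hS : IsGeodesicallyConvex G S) (hG : G.Connected) {x y z w : V} (hx : x ∈ S) (hy : y ∈ S)
    (hz : z ∈ S) (hw : w ∈ S) : AttainedOnBiconnectedSet G (graphDelta4 G x y z w) := by
  induction S using WellFoundedLT.induction generalizing x y z w with
  | ind S ih =>
  by_cases hB : IsBiconnectedSet G S
  · exact ⟨S, hB, x, hx, y, hy, z, hz, w, hw, le_rfl⟩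
  obtain ⟨c, hc, hcut⟩ : ∃ c ∈ S, ¬(G.induce (S \ {c})).Preconnected := by
    by_contra! h
    exact hB ⟨hS.connected_induce hG ⟨x, hx⟩, h⟩
  set R := ReachableWithin G (S \ {c})
  have side {x y z w : V} (hx : x ∈ S) (hyz : R y z) (hyw : R y w) :
      AttainedOnBiconnectedSet G (graphDelta4 G x y z w) := by
    have hT := branch_ssubset (a := y) hc hcut
    have hTconv := isGeodesicallyConvex_branch (a := y) hS hG hc
    have hyT : y ∈ branch G S c y := Or.inr (hyz.trans hyz.symm)
    have hzT : z ∈ branch G S c y := Or.inr hyz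
    have hwT : w ∈ branch G S c y := Or.inr hyw
    by_cases hxT : x ∈ branch G S c y
    · exact ih _ hT hTconv hxT hyT hzT hwT
    · rw [hS.graphDelta4_eq_of_not_mem_branch hG hc hx hxT hyT hzT hwT]
      exact ih _ hT hTconv (Or.inl rfl) hyT hzT hwT
  have split {x y z w : V} (hx : x ∈ S) (hy : y ∈ S) (hz : z ∈ S) (hw : w ∈ S) (hxz : ¬R x z)
      (hxw : ¬R x w) (hyz : ¬R y z) (hyw : ¬R y w) :
      AttainedOnBiconnectedSet G (graphDelta4 G x y z w) := by
    rw [hS.graphDelta4_eq_zero_of_not_reachableWithin hG hx hy hz hw hxz hxw hyz hyw]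
    exact attainedOnBiconnectedSet_zero c
  rcases related_triple_or_unrelated_pairs (R := R) (fun h ↦ h.symm) (fun h₁ h₂ ↦ h₁.trans h₂)
    x y z w with ⟨h₁, h₂⟩ | ⟨h₁, h₂⟩ | ⟨h₁, h₂⟩ | ⟨h₁, h₂⟩ | ⟨h₁, h₂, h₃, h₄⟩ |
    ⟨h₁, h₂, h₃, h₄⟩ | ⟨h₁, h₂, h₃, h₄⟩
  · exact side hx h₁ h₂
  · rw [graphDelta4_comm34, graphDelta4_comm23, graphDelta4_comm12]
    exact side hw h₁ h₂
  · rw [graphDelta4_comm23, graphDelta4_comm12]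
    exact side hz h₁ h₂
  · rw [graphDelta4_comm12]
    exact side hy h₁ h₂
  · exact split hx hy hz hw h₁ h₂ h₃ h₄
  · rw [graphDelta4_comm23]
    exact split hx hz hy hw h₁ h₂ h₃ h₄
  · rw [graphDelta4_comm34, graphDelta4_comm23]
    exact split hx hw hy hz h₁ h₂ h₃ h₄

theorem reachable_deleteEdges_of_reachable_induce {s : Set V} {e : Sym2 V} {x : V} (hxe : x ∈ e)
    (hx : x ∉ s) {a b : s} (h : (G.induce s).Reachable a b) :
    (G.deleteEdges {e}).Reachable a b := by
  refine h.map ⟨Subtype.val, fun {a b} hab ↦ deleteEdges_adj.2 ⟨hab, fun he ↦ ?_⟩⟩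
  rw [← Set.mem_singleton_iff.1 he, Sym2.mem_iff] at hxe
  rcases hxe with rfl | rfl
  exacts [hx a.2, hx b.2]

theorem IsBiconnectedSet.exists_subset_pair (hG : G.IsAcyclic) {B : Set V}
    (hB : IsBiconnectedSet G B) : ∃ u v, B ⊆ {u, v} := by
  by_contra! h
  obtain ⟨⟨p, hp⟩⟩ := hB.1.nonempty
  obtain ⟨q, hq, hqp⟩ := Set.not_subset.1 (h p p)
  obtain ⟨W⟩ := hB.1.preconnected ⟨p, hp⟩ ⟨q, hq⟩
  have hW : ¬W.Nil := fun hn ↦ hqp (Or.inl (congrArg Subtype.val hn.eq).symm)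
  obtain ⟨r, hr, hr'⟩ := Set.not_subset.1 (h p W.snd)
  simp only [Set.mem_insert_iff, Set.mem_singleton_iff, not_or] at hr'
  have hpm : G.Adj p W.snd := W.adj_snd hW
  refine isBridge_iff.1 (isAcyclic_iff_forall_adj_isBridge.1 hG hpm) ?_
  have hpr := reachable_deleteEdges_of_reachable_induce (Sym2.mem_mk_right p W.snd)
    (fun h ↦ h.2 rfl) (hB.2 _ W.snd.2 ⟨p, hp, hpm.ne⟩ ⟨r, hr, hr'.2⟩)
  have hrm := reachable_deleteEdges_of_reachable_induce (Sym2.mem_mk_left p W.snd)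
    (fun h ↦ h.2 rfl) (hB.2 p hp ⟨r, hr, hr'.1⟩ ⟨W.snd, W.snd.2, hpm.ne.symm⟩)
  exact hpr.trans hrm

end Biconnected

/-- The hyperbolicity of a finite connected graph is attained on a quadruple lying in a
common biconnected component: if `x,y,z,w` realize the maximum hyperbolicity
`δ(G) > 0`, then some quadruple within a single biconnected component achieves
hyperbolicity at least `δ(G)`.  In particular, if `G` is a tree then `δ(G) = 0`. -/
theorem hyperbolicity_attained_in_biconnected_component {V : Type*} [Fintype V]
    (G : SimpleGraph V) (hG : G.Connected) :
    (∀ x y z w : V,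
      (∀ a b c d : V, graphDelta4 G a b c d ≤ graphDelta4 G x y z w) →
      0 < graphDelta4 G x y z w →
      ∃ B : Set V, IsBiconnectedComponent G B ∧
        ∃ a ∈ B, ∃ b ∈ B, ∃ c ∈ B, ∃ d ∈ B,
          graphDelta4 G x y z w ≤ graphDelta4 G a b c d) ∧
    (G.IsTree → ∀ a b c d : V, graphDelta4 G a b c d = 0) := by
  have attained (x y z w : V) : AttainedOnBiconnectedSet G (graphDelta4 G x y z w) :=
    (isGeodesicallyConvex_univ G).attainedOnBiconnectedSet hG trivial trivial trivial trivial
  refine ⟨fun x y z w _ _ ↦ ?_, fun hT a b c d ↦ ?_⟩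
  · obtain ⟨B₀, hB₀, a, ha, b, hb, c, hc, d, hd, hle⟩ := attained x y z w
    obtain ⟨B, hB, hB₀B⟩ := hB₀.exists_isBiconnectedComponent_superset
    exact ⟨B, hB, a, hB₀B ha, b, hB₀B hb, c, hB₀B hc, d, hB₀B hd, hle⟩
  · obtain ⟨B, hB, p, hp, q, hq, r, hr, s, hs, hle⟩ := attained a b c d
    obtain ⟨u, v, huv⟩ := hB.exists_subset_pair hT.isAcyclic
    rw [graphDelta4_eq_zero_of_mem_pair (huv hp) (huv hq) (huv hr) (huv hs)] at hle
    exact le_antisymm hle (graphDelta4_nonneg a b c d)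
end
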